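/- arXiv:hep-ph/0605184 — 4 statements merged into one kernel-verified Lean document; each statement's English description precedes it below -/
import Mathlib

section
/- Define K₀ = φ₁†φ₁ + φ₂†φ₂ and K_a = Σ_{i,j} (φ_i†φ_j)(σ_a)_{ij} for a = 1,2,3 with σ_a the Pauli matrices. Then K₀ ≥ 0 and K₀² - K₁² - K₂² - K₃² ≥ 0, i.e., the four-vector (K₀, K) lies on or inside the forward light cone. -/
open Matrix

/-- The three Pauli matrices σ₁, σ₂, σ₃. -/
noncomputable def pauli : Fin 3 → Matrix (Fin 2) (Fin 2) ℂ :=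
  ![!![0, 1; 1, 0], !![0, -Complex.I; Complex.I, 0], !![1, 0; 0, -1]]

/-- K₀ = φ₁†φ₁ + φ₂†φ₂ and K_a = Σ_{i,j} (φ_i†φ_j)(σ_a)_{ij} satisfy
K₀ ≥ 0 and K₀² - K₁² - K₂² - K₃² ≥ 0. -/
theorem stmt_1 (φ : Fin 2 → Fin 2 → ℂ) (K0 : ℝ) (K : Fin 3 → ℝ)
    (hK0 : (K0 : ℂ) = ∑ i, ∑ k, starRingEnd ℂ (φ i k) * φ i k)
    (hK : ∀ a, (K a : ℂ) =
      ∑ i, ∑ j, (∑ k, starRingEnd ℂ (φ i k) * φ j k) * pauli a i j) :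
    0 ≤ K0 ∧ K 0 ^ 2 + K 1 ^ 2 + K 2 ^ 2 ≤ K0 ^ 2 := by
  have h0 := hK0
  have h1 := hK 0
  have h2 := hK 1
  have h3 := hK 2
  simp [pauli, Fin.sum_univ_two, Complex.ext_iff, Complex.mul_re, Complex.mul_im,
    Complex.add_re, Complex.add_im] at h0 h1 h2 h3
  obtain ⟨h0, -⟩ := h0
  obtain ⟨h1, -⟩ := h1
  obtain ⟨h2, -⟩ := h2
  obtain ⟨h3, -⟩ := h3
  set a1 := (φ 0 0).re; set a2 := (φ 0 0).im
  set b1 := (φ 0 1).re; set b2 := (φ 0 1).im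
  set c1 := (φ 1 0).re; set c2 := (φ 1 0).im
  set d1 := (φ 1 1).re; set d2 := (φ 1 1).im
  constructor
  · nlinarith [sq_nonneg a1, sq_nonneg a2, sq_nonneg b1, sq_nonneg b2,
      sq_nonneg c1, sq_nonneg c2, sq_nonneg d1, sq_nonneg d2]
  · have key : K0^2 - K 0^2 - K 1^2 - K 2^2 =
        4*((a1*d1 - a2*d2 - b1*c1 + b2*c2)^2 + (a1*d2 + a2*d1 - b1*c2 - b2*c1)^2) := by
      rw [h0, h1, h2, h3]; ring
    nlinarith [sq_nonneg (a1*d1 - a2*d2 - b1*c1 + b2*c2),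
      sq_nonneg (a1*d2 + a2*d1 - b1*c2 - b2*c1)]
end

section
/- For any real numbers K₀, K₁, K₂, K₃ with K₀ ≥ 0 and K₀² ≥ K₁² + K₂² + K₃², there exist vectors φ₁, φ₂ ∈ ℂ² such that K₀ = φ₁†φ₁ + φ₂†φ₂ and K_a = Σ_{i,j}(φ_i†φ_j)(σ_a)_{ij} for a = 1,2,3. -/
open Matrix

set_option maxHeartbeats 1000000 in
/-- any four-vector (K₀, K) on or inside the forward light cone is
realised by some Higgs field configuration φ₁, φ₂ ∈ ℂ². -/
theorem stmt_2 (K0 : ℝ) (K : Fin 3 → ℝ)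
    (hpos : 0 ≤ K0) (hcone : K 0 ^ 2 + K 1 ^ 2 + K 2 ^ 2 ≤ K0 ^ 2) :
    ∃ φ : Fin 2 → Fin 2 → ℂ,
      (K0 : ℂ) = ∑ i, ∑ k, starRingEnd ℂ (φ i k) * φ i k ∧
      ∀ a, (K a : ℂ) =
        ∑ i, ∑ j, (∑ k, starRingEnd ℂ (φ i k) * φ j k) * pauli a i j := by
  by_cases h : K0 + K 2 = 0
  · have h3 : K 2 = -K0 := by linarith
    have h0 : K 0 = 0 := by nlinarith
    have h1 : K 1 = 0 := by nlinarith
    refine ⟨![![0, 0], ![0, Real.sqrt K0]], ?_, ?_⟩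
    · simp [Fin.sum_univ_two, Complex.conj_ofReal, ← Complex.ofReal_mul,
        Real.mul_self_sqrt hpos]
    · intro a
      fin_cases a <;>
        simp [pauli, Fin.sum_univ_two, Complex.conj_ofReal, h0, h1, h3,
          ← Complex.ofReal_mul, Real.mul_self_sqrt hpos]
  · have hs : 0 < K0 + K 2 := by
      rcases lt_or_ge 0 (K0 + K 2) with h' | h'
      · exact h'
      · exfalso; apply h; nlinarith
    set a : ℝ := Real.sqrt ((K0 + K 2) / 2) with ha
    have ha2 : a * a = (K0 + K 2) / 2 := Real.mul_self_sqrt (by linarith)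
    have ha0 : a ≠ 0 := by
      intro h'
      rw [h', mul_zero] at ha2; linarith
    have haC : (a : ℂ) ≠ 0 := by exact_mod_cast ha0
    set c : ℝ := Real.sqrt ((K0 ^ 2 - K 0 ^ 2 - K 1 ^ 2 - K 2 ^ 2) / (2 * (K0 + K 2))) with hc
    have hc2 : c * c = (K0 ^ 2 - K 0 ^ 2 - K 1 ^ 2 - K 2 ^ 2) / (2 * (K0 + K 2)) :=
      Real.mul_self_sqrt (div_nonneg (by nlinarith) (by linarith))
    refine ⟨![![a, 0], ![(K 0 + K 1 * Complex.I) / (2 * a), c]], ?_, ?_⟩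
    · have hA2 : (a:ℂ) * a = ((K0:ℂ) + (K 2:ℂ)) / 2 := by exact_mod_cast congrArg Complex.ofReal ha2
      have hC2 : (c:ℂ) * c = ((K0:ℂ)^2 - (K 0:ℂ)^2 - (K 1:ℂ)^2 - (K 2:ℂ)^2) / (2*((K0:ℂ)+(K 2:ℂ))) := by exact_mod_cast congrArg Complex.ofReal hc2
      have hsC : (K0:ℂ) + (K 2:ℂ) ≠ 0 := by exact_mod_cast hs.ne'
      simp only [Fin.sum_univ_two, Matrix.cons_val_zero, Matrix.cons_val_one, Matrix.head_cons,
        map_div₀, map_add, _root_.map_mul, Complex.conj_ofReal, Complex.conj_I, map_ofNat]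
      have hA2' : (a:ℂ)^2 = ((K0:ℂ) + (K 2:ℂ)) / 2 := by rw [sq]; exact hA2
      have hC2' : (c:ℂ)^2 = ((K0:ℂ)^2 - (K 0:ℂ)^2 - (K 1:ℂ)^2 - (K 2:ℂ)^2) / (2*((K0:ℂ)+(K 2:ℂ))) := by rw [sq]; exact hC2
      field_simp
      ring_nf
      rw [Complex.I_sq, show ((a:ℂ))^4 = ((a:ℂ)^2)^2 by ring, hA2', hC2']
      field_simp
      ring
    · have hA2' : (a:ℂ)^2 = ((K0:ℂ) + (K 2:ℂ)) / 2 := by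
        rw [sq]; exact_mod_cast congrArg Complex.ofReal ha2
      have hC2' : (c:ℂ)^2 = ((K0:ℂ)^2 - (K 0:ℂ)^2 - (K 1:ℂ)^2 - (K 2:ℂ)^2) / (2*((K0:ℂ)+(K 2:ℂ))) := by
        rw [sq]; exact_mod_cast congrArg Complex.ofReal hc2
      have hsC : (K0:ℂ) + (K 2:ℂ) ≠ 0 := by exact_mod_cast hs.ne'
      intro b
      fin_cases b
      · simp [pauli, Fin.sum_univ_two, Complex.conj_ofReal, Complex.conj_I, map_div₀, map_ofNat]
        field_simp
        ring
      · simp [pauli, Fin.sum_univ_two, Complex.conj_ofReal, Complex.conj_I, map_div₀, map_ofNat]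
        field_simp
        ring_nf
        rw [Complex.I_sq]
        ring
      · simp [pauli, Fin.sum_univ_two, Complex.conj_ofReal, Complex.conj_I, map_div₀, map_ofNat]
        field_simp
        ring_nf
        rw [Complex.I_sq, show ((a:ℂ))^4 = ((a:ℂ)^2)^2 by ring, hA2', hC2']
        field_simp
        ring
end

section
/- Let p lie on the forward light cone (p₀ = |p⃗| > 0) with (Ẽ - u_p g)p = -ξ/2, and let q lie strictly inside (q₀ > |q⃗|) with Ẽq = -ξ/2. Then V(p) - V(q) = -u_p pᵀ g q and also V(p) - V(q) = (p - q)ᵀ Ẽ (p - q). Consequently, if u_p > 0 then V(p) < V(q) and Ẽ has a negative eigenvalue, so q is not a local minimum of V (whose Hessian is 2Ẽ). -/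
open Matrix

set_option maxHeartbeats 1000000

lemma symdot {E : Matrix (Fin 4) (Fin 4) ℝ} (hE : E.IsSymm) (x y : Fin 4 → ℝ) :
    x ⬝ᵥ (E *ᵥ y) = y ⬝ᵥ (E *ᵥ x) := by
  rw [Matrix.dotProduct_mulVec]
  nth_rewrite 1 [← hE]
  rw [Matrix.vecMul_transpose, dotProduct_comm]

/-- for a stationary point p on the forward light cone (with Lagrange
multiplier u_p) and a stationary point q strictly inside it (ẼK = -ξ/2), one has
V(p) - V(q) = -u_p pᵀgq = (p-q)ᵀẼ(p-q); if u_p > 0 then V(p) < V(q), Ẽ has a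
direction of negative curvature, and q is not a local minimum of V. -/
theorem stmt_15 (ξ p q : Fin 4 → ℝ) (up : ℝ)
    (E : Matrix (Fin 4) (Fin 4) ℝ) (hE : E.IsSymm)
    (g : Matrix (Fin 4) (Fin 4) ℝ)
    (hg : g = Matrix.diagonal ![1, -1, -1, -1])
    (V : (Fin 4 → ℝ) → ℝ)
    (hV : ∀ x, V x = x ⬝ᵥ ξ + x ⬝ᵥ (E *ᵥ x))
    (hpcone : p ⬝ᵥ (g *ᵥ p) = 0) (hp0 : 0 < p 0)
    (hqin : 0 < q ⬝ᵥ (g *ᵥ q)) (hq0 : 0 < q 0)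
    (hpstat : (E - up • g) *ᵥ p = -((1 / 2 : ℝ) • ξ))
    (hqstat : E *ᵥ q = -((1 / 2 : ℝ) • ξ)) :
    V p - V q = -up * (p ⬝ᵥ (g *ᵥ q)) ∧
    V p - V q = (p - q) ⬝ᵥ (E *ᵥ (p - q)) ∧
    (0 < up →
      V p < V q ∧
      (∃ v : Fin 4 → ℝ, v ≠ 0 ∧ v ⬝ᵥ (E *ᵥ v) < 0) ∧
      ¬ IsLocalMin V q) := by
  -- E *ᵥ p
  have hEp : E *ᵥ p = -((1 / 2 : ℝ) • ξ) + up • (g *ᵥ p) := by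
    have := hpstat
    rw [Matrix.sub_mulVec, Matrix.smul_mulVec, sub_eq_iff_eq_add] at this
    exact this
  have hgsym : g.IsSymm := by
    rw [hg]; exact (Matrix.isSymm_diagonal _)
  have hgpq : q ⬝ᵥ (g *ᵥ p) = p ⬝ᵥ (g *ᵥ q) := by
    rw [Matrix.dotProduct_mulVec]
    nth_rewrite 1 [← hgsym]
    rw [Matrix.vecMul_transpose, dotProduct_comm]
  set S := p ⬝ᵥ ξ with hS
  set T := q ⬝ᵥ ξ with hT
  set G := p ⬝ᵥ (g *ᵥ q) with hG
  have hpEp : p ⬝ᵥ (E *ᵥ p) = -(1 / 2) * S := by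
    rw [hEp, dotProduct_add, dotProduct_neg, dotProduct_smul,
      dotProduct_smul, hpcone]
    simp [hS]
  have hqEq : q ⬝ᵥ (E *ᵥ q) = -(1 / 2) * T := by
    rw [hqstat, dotProduct_neg, dotProduct_smul]
    simp [hT]
  have hpEq : p ⬝ᵥ (E *ᵥ q) = -(1 / 2) * S := by
    rw [hqstat, dotProduct_neg, dotProduct_smul]
    simp [hS]
  have hqEp : q ⬝ᵥ (E *ᵥ p) = -(1 / 2) * T + up * G := by
    rw [hEp, dotProduct_add, dotProduct_neg, dotProduct_smul,
      dotProduct_smul, hgpq]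
    simp [hT, smul_eq_mul]
  have hST : -(1 / 2) * S = -(1 / 2) * T + up * G := by
    rw [← hpEq, symdot hE, hqEp]
  have hVp : V p = S / 2 := by rw [hV, hpEp]; ring
  have hVq : V q = T / 2 := by rw [hV, hqEq]; ring
  have h1 : V p - V q = -up * G := by rw [hVp, hVq]; linarith
  have h2 : V p - V q = (p - q) ⬝ᵥ (E *ᵥ (p - q)) := by
    rw [Matrix.mulVec_sub, sub_dotProduct, dotProduct_sub,
      dotProduct_sub, hpEp, hqEq, hpEq, hqEp, hVp, hVq]
    linarith
  refine ⟨h1, h2, fun hup => ?_⟩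
  -- G > 0
  have hGpos : 0 < G := by
    have e1 : p ⬝ᵥ (g *ᵥ p) =
        p 0 * p 0 - p 1 * p 1 - p 2 * p 2 - p 3 * p 3 := by
      subst hg
      simp [Matrix.mulVec_diagonal, dotProduct, Fin.sum_univ_four]
      ring
    have e2 : q ⬝ᵥ (g *ᵥ q) =
        q 0 * q 0 - q 1 * q 1 - q 2 * q 2 - q 3 * q 3 := by
      subst hg
      simp [Matrix.mulVec_diagonal, dotProduct, Fin.sum_univ_four]
      ring
    have e3 : G = p 0 * q 0 - p 1 * q 1 - p 2 * q 2 - p 3 * q 3 := by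
      rw [hG]; subst hg
      simp [Matrix.mulVec_diagonal, dotProduct, Fin.sum_univ_four]
      ring
    rw [e1] at hpcone
    rw [e2] at hqin
    rw [e3]
    have hcs : (p 1 * q 1 + p 2 * q 2 + p 3 * q 3) ^ 2 ≤
        (p 1 ^ 2 + p 2 ^ 2 + p 3 ^ 2) * (q 1 ^ 2 + q 2 ^ 2 + q 3 ^ 2) := by
      nlinarith [sq_nonneg (p 1 * q 2 - p 2 * q 1), sq_nonneg (p 1 * q 3 - p 3 * q 1),
        sq_nonneg (p 2 * q 3 - p 3 * q 2)]
    have hs2 : (p 1 * q 1 + p 2 * q 2 + p 3 * q 3) ^ 2 < (p 0 * q 0) ^ 2 := by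
      nlinarith [mul_pos (mul_pos hp0 hp0) hqin]
    nlinarith [hs2, mul_pos hp0 hq0]
  have hlt : V p < V q := by nlinarith
  have hneg : (p - q) ⬝ᵥ (E *ᵥ (p - q)) < 0 := by rw [← h2]; linarith
  have hvne : (p - q) ≠ 0 := by
    intro h0
    rw [h0] at hneg
    simp at hneg
  refine ⟨hlt, ⟨p - q, hvne, hneg⟩, ?_⟩
  -- not a local min
  intro hmin
  set v := p - q with hv
  set c := v ⬝ᵥ (E *ᵥ v) with hc
  have hVline : ∀ t : ℝ, V (q + t • v) = V q + t ^ 2 * c := by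
    intro t
    have hvEq : v ⬝ᵥ (E *ᵥ q) = -(1 / 2) * (v ⬝ᵥ ξ) := by
      rw [hqstat, dotProduct_neg, dotProduct_smul]
      simp
    have hqEv : q ⬝ᵥ (E *ᵥ v) = -(1 / 2) * (v ⬝ᵥ ξ) := by
      rw [symdot hE, hvEq]
    rw [hV, hV]
    rw [Matrix.mulVec_add, Matrix.mulVec_smul, add_dotProduct,
      add_dotProduct, dotProduct_add, dotProduct_add,
      smul_dotProduct, smul_dotProduct, dotProduct_smul,
      smul_dotProduct, dotProduct_smul]
    have hvEqsym : v ⬝ᵥ (E *ᵥ q) = -(1 / 2) * (v ⬝ᵥ ξ) := hvEq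
    rw [hqEv, hvEqsym]
    simp [smul_eq_mul, hc]
    ring
  have hcont : Continuous fun t : ℝ => q + t • v := by continuity
  have htend : Filter.Tendsto (fun t : ℝ => q + t • v) (nhds 0) (nhds q) :=
    hcont.tendsto' 0 q (by simp)
  have hev : ∀ᶠ t : ℝ in nhds 0, V q ≤ V (q + t • v) := htend.eventually hmin
  have hev' : ∀ᶠ t : ℝ in nhdsWithin 0 {(0:ℝ)}ᶜ, V q ≤ V (q + t • v) :=
    hev.filter_mono nhdsWithin_le_nhds
  obtain ⟨t, hle, htne⟩ := (hev'.and self_mem_nhdsWithin).exists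
  rw [hVline t] at hle
  have : 0 < t ^ 2 := by
    rcases lt_or_gt_of_ne htne with h | h <;> nlinarith
  nlinarith
end

section
/- For the MSSM Higgs potential with quartic parameters η₀₀ = g²/8, η = 0, E = diag(-g²/8, -g²/8, g'²/8) and quadratic parameters ξ₀ = |μ|² + (m_{H₁}² + m_{H₂}²)/2, ξ = (-Re m₃², Im m₃², (m_{H₁}² - m_{H₂}²)/2), the potential V = ξ₀K₀ + ξᵀK + η₀₀K₀² + KᵀEK is bounded below on the forward light cone with V → ∞ as K₀ → ∞ in every direction if and only if |m₃²| < |μ|² + (m_{H₁}² + m_{H₂}²)/2. -/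
open Matrix Filter

lemma lin_quad_tendsto (a b : ℝ) (hb : 0 < b) :
    Tendsto (fun x : ℝ => a * x + b * x ^ 2) atTop atTop := by
  apply tendsto_atTop_mono' atTop ?_ tendsto_id
  filter_upwards [eventually_ge_atTop ((1 - a) / b), eventually_ge_atTop (0:ℝ)] with x h1 h2
  have h3 : (1 - a) ≤ b * x := by rw [div_le_iff₀ hb] at h1; linarith
  simp only [id_eq]
  nlinarith

lemma quad_lb (d S t : ℝ) (hS : 0 < S) : -(2 * d ^ 2) / S ≤ d * t + S / 8 * t ^ 2 := by
  rw [div_le_iff₀ hS]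
  nlinarith [sq_nonneg (S * t + 4 * d)]

set_option maxHeartbeats 1000000 in
/-- the MSSM Higgs potential, with quartic parameters
η₀₀ = g²/8, η = 0, E = diag(-g²/8, -g²/8, g'²/8) and quadratic parameters
ξ₀ = |μ|² + (m_{H₁}² + m_{H₂}²)/2, ξ = (-Re m₃², Im m₃², (m_{H₁}² - m_{H₂}²)/2),
is bounded below on the forward light cone with V → ∞ as K₀ → ∞ in every direction
if and only if |m₃²| < |μ|² + (m_{H₁}² + m_{H₂}²)/2. -/
theorem stmt_16 (g gp : ℝ) (hg : 0 < g) (hgp : 0 < gp)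
    (musq mH1 mH2 : ℝ) (hmu : 0 ≤ musq) (m3 : ℂ)
    (ξ0 : ℝ) (ξ : Fin 3 → ℝ) (E : Matrix (Fin 3) (Fin 3) ℝ)
    (hξ0 : ξ0 = musq + (mH1 + mH2) / 2)
    (hξ : ξ = ![-m3.re, m3.im, (mH1 - mH2) / 2])
    (hE : E = Matrix.diagonal ![-(g ^ 2) / 8, -(g ^ 2) / 8, gp ^ 2 / 8])
    (V : ℝ → (Fin 3 → ℝ) → ℝ)
    (hV : ∀ K0 K, V K0 K = ξ0 * K0 + ξ ⬝ᵥ K + g ^ 2 / 8 * K0 ^ 2 + K ⬝ᵥ (E *ᵥ K)) :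
    ((∃ c : ℝ, ∀ K0 K, 0 ≤ K0 → ∑ a, (K a) ^ 2 ≤ K0 ^ 2 → c ≤ V K0 K) ∧
     (∀ k : Fin 3 → ℝ, ∑ a, (k a) ^ 2 ≤ 1 →
        Tendsto (fun K0 => V K0 (K0 • k)) atTop atTop)) ↔
    ‖m3‖ < musq + (mH1 + mH2) / 2 := by
  set A := ‖m3‖ with hA
  have hA0 : 0 ≤ A := norm_nonneg m3
  have hA2 : A ^ 2 = m3.re ^ 2 + m3.im ^ 2 := by
    rw [hA, Complex.sq_norm, Complex.normSq_apply]; ring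
  -- explicit form of V
  have hVe : ∀ K0 (K : Fin 3 → ℝ), V K0 K =
      ξ0 * K0 + (-m3.re * K 0 + m3.im * K 1 + (mH1 - mH2)/2 * K 2)
        + g ^ 2 / 8 * K0 ^ 2
        + (-(g^2)/8 * (K 0)^2 - g^2/8 * (K 1)^2 + gp^2/8 * (K 2)^2) := by
    intro K0 K
    rw [hV, hξ, hE]
    simp [dotProduct, mulVec, Fin.sum_univ_three, Matrix.diagonal]
    ring
  constructor
  · rintro ⟨-, h2⟩
    rw [← hξ0]
    by_cases hm : m3 = 0
    · -- A = 0; use direction (1,0,0)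
      have hA' : A = 0 := by simp [hA, hm]
      set k : Fin 3 → ℝ := ![1, 0, 0] with hk
      have hsum : ∑ a, (k a) ^ 2 ≤ 1 := by
        simp [hk, Fin.sum_univ_three]
      have ht := h2 k hsum
      have hfe : (fun K0 => V K0 (K0 • k)) = fun K0 => ξ0 * K0 := by
        funext K0
        rw [hVe]
        simp [hk, hm]
        ring
      rw [hfe] at ht
      obtain ⟨x, hx1, hx2⟩ := ((ht.eventually_ge_atTop 1).and (eventually_ge_atTop 1)).exists
      rw [hA']
      nlinarith
    · have hApos : 0 < A := norm_pos_iff.mpr hm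
      set k : Fin 3 → ℝ := ![m3.re / A, -m3.im / A, 0] with hk
      have hsum : ∑ a, (k a) ^ 2 ≤ 1 := by
        simp only [hk, Fin.sum_univ_three]
        have h : (m3.re / A) ^ 2 + (-m3.im / A) ^ 2 = 1 := by
          field_simp
          linarith [hA2]
        simp only [Matrix.cons_val_zero, Matrix.cons_val_one, Matrix.head_cons,
          Matrix.cons_val_two, Matrix.tail_cons]
        nlinarith [h]
      have ht := h2 k hsum
      have hfe : (fun K0 => V K0 (K0 • k)) = fun K0 => (ξ0 - A) * K0 := by
        funext K0
        rw [hVe]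
        simp only [hk, Pi.smul_apply, smul_eq_mul]
        simp only [Matrix.cons_val_zero, Matrix.cons_val_one, Matrix.head_cons,
          Matrix.cons_val_two, Matrix.tail_cons]
        have e1 : -m3.re * (K0 * (m3.re / A)) + m3.im * (K0 * (-m3.im / A)) = -A * K0 := by
          field_simp
          linear_combination K0 * hA2
        have e2 : (K0 * (m3.re / A)) ^ 2 + (K0 * (-m3.im / A)) ^ 2 = K0 ^ 2 := by
          field_simp
          linear_combination (-K0 ^ 2) * hA2
        linear_combination e1 + (-(g ^ 2) / 8) * e2
      rw [hfe] at ht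
      obtain ⟨x, hx1, hx2⟩ := ((ht.eventually_ge_atTop 1).and (eventually_ge_atTop 1)).exists
      nlinarith
  · intro hlt
    rw [← hξ0] at hlt
    constructor
    · -- bounded below
      refine ⟨-(2 * ((mH1 - mH2) / 2) ^ 2) / (g ^ 2 + gp ^ 2), fun K0 K hK0 hK => ?_⟩
      rw [Fin.sum_univ_three] at hK
      rw [hVe]
      -- Cauchy–Schwarz: -m3.re * K 0 + m3.im * K 1 ≥ -A * K0
      have hCS2 : (-m3.re * K 0 + m3.im * K 1) ^ 2 ≤ A ^ 2 * K0 ^ 2 := by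
        nlinarith [sq_nonneg (m3.re * K 1 + m3.im * K 0), sq_nonneg (K 2), hA2,
          sq_nonneg m3.re, sq_nonneg m3.im]
      have hCS : -A * K0 ≤ -m3.re * K 0 + m3.im * K 1 := by
        nlinarith [hCS2, sq_nonneg (-m3.re * K 0 + m3.im * K 1 + A * K0),
          mul_nonneg hA0 hK0]
      have hpos : A * K0 ≤ ξ0 * K0 := mul_le_mul_of_nonneg_right (le_of_lt hlt) hK0
      have hq := quad_lb ((mH1 - mH2) / 2) (g ^ 2 + gp ^ 2) (K 2) (by positivity)
      have hg2 : g ^ 2 / 8 * (K 2) ^ 2 + g ^ 2 / 8 * (K 0) ^ 2 + g ^ 2 / 8 * (K 1) ^ 2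
          ≤ g ^ 2 / 8 * K0 ^ 2 := by
        have h8 : (0:ℝ) ≤ g ^ 2 / 8 := by positivity
        have := mul_le_mul_of_nonneg_left hK h8
        linarith [this]
      linarith [hCS, hpos, hq, hg2]
    · -- tendsto
      intro k hk
      rw [Fin.sum_univ_three] at hk
      set a : ℝ := ξ0 + (-m3.re * k 0 + m3.im * k 1 + (mH1 - mH2)/2 * k 2) with ha
      set b : ℝ := g ^ 2 / 8 * (1 - (k 0)^2 - (k 1)^2) + gp ^ 2 / 8 * (k 2)^2 with hb
      have hfe : (fun K0 => V K0 (K0 • k)) = fun K0 => a * K0 + b * K0 ^ 2 := by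
        funext K0
        rw [hVe]
        simp only [Pi.smul_apply, smul_eq_mul, ha, hb]
        ring
      rw [hfe]
      have hb0 : 0 ≤ b := by
        rw [hb]
        nlinarith [sq_nonneg (k 2), sq_nonneg g, sq_nonneg gp]
      rcases lt_or_eq_of_le hb0 with hbpos | hbz
      · exact lin_quad_tendsto a b hbpos
      · -- b = 0: flat direction, so k 2 = 0 and k0²+k1² = 1
        have hz := hbz.symm
        rw [hb] at hz
        have hnn1 : 0 ≤ 1 - (k 0) ^ 2 - (k 1) ^ 2 := by nlinarith [sq_nonneg (k 2)]
        have t1 : 0 ≤ g ^ 2 / 8 * (1 - (k 0) ^ 2 - (k 1) ^ 2) :=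
          mul_nonneg (by positivity) hnn1
        have h9a : gp ^ 2 / 8 * (k 2) ^ 2 ≤ 0 := by linarith [t1, hz]
        have hgp8 : (0:ℝ) < gp ^ 2 / 8 := by positivity
        have h9 : (k 2) ^ 2 = 0 := le_antisymm (by nlinarith [h9a, hgp8]) (sq_nonneg _)
        have h1 : (k 2) = 0 := by
          exact pow_eq_zero_iff (two_ne_zero) |>.mp h9
        have h2' : (k 0) ^ 2 + (k 1) ^ 2 = 1 := by
          rw [h1] at hz
          have hz' : g ^ 2 / 8 * (1 - (k 0) ^ 2 - (k 1) ^ 2) = 0 := by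
            rw [← hz]; ring
          rcases mul_eq_zero.mp hz' with h | h
          · exfalso
            have hgpos : (0:ℝ) < g ^ 2 / 8 := by positivity
            linarith
          · linarith
        have hCS2 : (-m3.re * k 0 + m3.im * k 1) ^ 2 ≤ A ^ 2 := by
          nlinarith [sq_nonneg (m3.re * k 1 + m3.im * k 0), hA2, h2']
        have hCS : -A ≤ -m3.re * k 0 + m3.im * k 1 := by
          nlinarith [hCS2, sq_nonneg (-m3.re * k 0 + m3.im * k 1 + A)]
        have hapos : 0 < a := by rw [ha, h1]; nlinarith
        have heq : (fun K0 : ℝ => a * K0 + b * K0 ^ 2) = fun K0 => a * K0 := by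
          funext K0; rw [← hbz]; ring
        rw [heq]
        exact (tendsto_id (α := ℝ)).const_mul_atTop hapos
end
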